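/- BCJR forward recursion for the a posteriori vector: For a non-controllable FSC with a source in 𝒫_v(u,u) (0 ≤ u ≤ v), let t be such that 1 ≤ t − u and t ≤ N, and let y^{t-u} be an output history with Pr(Y^{t-u} = y^{t-u}) > 0. Writing α_{t-1} = α_{t-1}(y^{t-u-1}) and defining β(x_{t-v}^t, s_{t-v-1}^{t-u}) := α_{t-1}(x_{t-v}^{t-1}, s_{t-v-1}^{t-u-1}) · π_t(x_t | x_{t-v}^{t-1}, s_{t-v-1}^{t-u-1}, y^{t-u-1}) · W(y_{t-u}, s_{t-u} | x_{t-u}, s_{t-u-1}), the a posteriori vector satisfies α_t(x_{t-v+1}^t, s_{t-v}^{t-u}) = ( Σ_{x_{t-v} ∈ 𝒳, s_{t-v-1} ∈ 𝒮} β(x_{t-v}^t, s_{t-v-1}^{t-u}) ) / ( Σ_{x_{t-v}^t, s_{t-v-1}^{t-u}} β(x_{t-v}^t, s_{t-v-1}^{t-u}) ) (windows truncated for small indices). -/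

import Mathlib

/-!
Common framework: finite-state channels (FSCs), non-controllable FSCs,
sources with delayed feedback (FB) and delayed state information (SI),
induced joint pmfs, conditional probabilities and conditional mutual
information, following Huang–Kavčić–Ma, "Upper Bounds on the Capacities of
Non-Controllable Finite-State Channels with/without Feedback".

Time convention: for a horizon `N`, the channel inputs are `X_1,…,X_N`
(coordinate `x i` of `x : Fin N → X` is `X_{i+1}`), the states are
`S_0,…,S_N` (coordinate `s j` of `s : Fin (N+1) → S` is `S_j`), and the
outputs are `Y_1,…,Y_N` (coordinate `y i` is `Y_{i+1}`).
-/

open Finset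

noncomputable section

namespace FSCPaper

/-- Probability of an event under a pmf `p` on a finite sample space. -/
def prE {Ω : Type} [Fintype Ω] (p : Ω → ℝ) (E : Set Ω) : ℝ :=
  ∑ ω : Ω, E.indicator p ω

/-- Conditional probability `Pr(E | F)`, a ratio of (sums of) marginals
(with the `0/0 = 0` junk-value convention of real division). -/
def condPr {Ω : Type} [Fintype Ω] (p : Ω → ℝ) (E F : Set Ω) : ℝ :=
  prE p (E ∩ F) / prE p F

/-- The conditional pmf `Pr(· | F)` given an event `F`. -/
def condPMF {Ω : Type} [Fintype Ω] (p : Ω → ℝ) (F : Set Ω) : Ω → ℝ :=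
  fun ω => F.indicator p ω / prE p F

/-- Conditional mutual information `I(A;B|C)` of finite-valued random
variables `fA, fB, fC` under the pmf `p`; zero-probability terms
contribute `0` (the factor in front of the logarithm vanishes). -/
def condMI {Ω A B C : Type} [Fintype Ω] [Fintype A] [Fintype B] [Fintype C]
    (p : Ω → ℝ) (fA : Ω → A) (fB : Ω → B) (fC : Ω → C) : ℝ :=
  ∑ a : A, ∑ b : B, ∑ c : C,
    prE p {ω | fA ω = a ∧ fB ω = b ∧ fC ω = c} *
      Real.log (condPr p {ω | fA ω = a ∧ fB ω = b} {ω | fC ω = c} /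
        (condPr p {ω | fA ω = a} {ω | fC ω = c} *
          condPr p {ω | fB ω = b} {ω | fC ω = c}))

/-- Trajectories `(x_1^N, s_0^N, y_1^N)`. -/
abbrev Traj (X S Y : Type) (N : ℕ) : Type :=
  (Fin N → X) × (Fin (N + 1) → S) × (Fin N → Y)

/-- A general finite-state channel: channel transition kernel
`W(y, s' | x, s)` (a pmf on `Y × S` for each `(x,s)`) and initial state
pmf `init`. -/
structure FSC (X S Y : Type) [Fintype S] [Fintype Y] : Type where
  W : Y → S → X → S → ℝ
  init : S → ℝ
  W_nonneg : ∀ y s' x s, 0 ≤ W y s' x s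
  W_sum : ∀ x s, (∑ y : Y, ∑ s' : S, W y s' x s) = 1
  init_nonneg : ∀ s, 0 ≤ init s
  init_sum : (∑ s : S, init s) = 1

/-- A source without feedback: conditional pmfs `π_t(x_t | x^{t-1})`;
`pol t x a` is the probability that `X_{t+1} = a` given that the previous
inputs are the corresponding coordinates of `x` (by `causal` it depends
only on the coordinates `x j` with `j < t`). -/
structure FFSource (X : Type) [Fintype X] (N : ℕ) : Type where
  pol : Fin N → (Fin N → X) → X → ℝ
  nonneg : ∀ t x a, 0 ≤ pol t x a
  sum_one : ∀ t x, (∑ a : X, pol t x a) = 1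
  causal : ∀ (t : Fin N) (x x' : Fin N → X),
    (∀ j : Fin N, (j : ℕ) < (t : ℕ) → x j = x' j) → pol t x = pol t x'

/-- A non-controllable finite-state channel: output kernel `P(y|x,s)`,
free state-transition kernel `Q(s'|s)`, and initial state pmf `init`. -/
structure NCFSC (X S Y : Type) [Fintype S] [Fintype Y] : Type where
  P : Y → X → S → ℝ
  Q : S → S → ℝ
  init : S → ℝ
  P_nonneg : ∀ y x s, 0 ≤ P y x s
  P_sum : ∀ x s, (∑ y : Y, P y x s) = 1
  Q_nonneg : ∀ s' s, 0 ≤ Q s' s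
  Q_sum : ∀ s, (∑ s' : S, Q s' s) = 1
  init_nonneg : ∀ s, 0 ≤ init s
  init_sum : (∑ s : S, init s) = 1

/-- A source with `u`-delayed feedback and `u`-delayed state information
(the set `𝒫(u,u)`): `pol t x s y a` is
`π_{t+1}(a | x^{t}, s_0^{t-u}, y^{t-u})` in 1-based time; by `causal` it
depends on `(x, s, y)` only through the coordinates
`x_1^{t}` (indices `j < t`), `s_0^{t-u}` (indices `j + u ≤ t`) and
`y_1^{t-u}` (indices `j + u + 1 ≤ t`), i.e. on the past inputs, the
`u`-delayed state information and the `u`-delayed output feedback. -/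
structure Source (X S Y : Type) [Fintype X] [Fintype S] [Fintype Y] (N u : ℕ) : Type where
  pol : Fin N → (Fin N → X) → (Fin (N + 1) → S) → (Fin N → Y) → X → ℝ
  nonneg : ∀ t x s y a, 0 ≤ pol t x s y a
  sum_one : ∀ t x s y, (∑ a : X, pol t x s y a) = 1
  causal : ∀ (t : Fin N) (x x' : Fin N → X) (s s' : Fin (N + 1) → S) (y y' : Fin N → Y),
    (∀ j : Fin N, (j : ℕ) < (t : ℕ) → x j = x' j) →
    (∀ j : Fin (N + 1), (j : ℕ) + u ≤ (t : ℕ) → s j = s' j) →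
    (∀ j : Fin N, (j : ℕ) + u + 1 ≤ (t : ℕ) → y j = y' j) →
    pol t x s y = pol t x' s' y'

variable {X S Y : Type} [Fintype X] [Fintype S] [Fintype Y]

/-- Joint pmf induced by a general FSC and a feedforward source:
`Pr(x^N, s_0^N, y^N) = μ(s_0) ∏_t π_t(x_t|x^{t-1}) W(y_t, s_t | x_t, s_{t-1})`. -/
def jointP0 {N : ℕ} (ch : FSC X S Y) (src : FFSource X N) (ω : Traj X S Y N) : ℝ :=
  ch.init (ω.2.1 0) *
    ∏ i : Fin N,
      src.pol i ω.1 (ω.1 i) *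
        ch.W (ω.2.2 i) (ω.2.1 i.succ) (ω.1 i) (ω.2.1 i.castSucc)

/-- Joint channel transition `W(y, s' | x, s) = P(y|x,s) · Q(s'|s)` of a
non-controllable FSC. -/
def NCFSC.W (ch : NCFSC X S Y) (y : Y) (s' : S) (x : X) (s : S) : ℝ :=
  ch.P y x s * ch.Q s' s

/-- Joint pmf induced by a non-controllable FSC and a source in `𝒫(u,u)`:
`Pr(x^N, s_0^N, y^N) = μ(s_0) ∏_t π_t(x_t|x^{t-1},s_0^{t-u-1},y^{t-u-1}) W(y_t,s_t|x_t,s_{t-1})`. -/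
def jointP {N u : ℕ} (ch : NCFSC X S Y) (src : Source X S Y N u) (ω : Traj X S Y N) : ℝ :=
  ch.init (ω.2.1 0) *
    ∏ i : Fin N,
      src.pol i ω.1 ω.2.1 ω.2.2 (ω.1 i) *
        ch.W (ω.2.2 i) (ω.2.1 i.succ) (ω.1 i) (ω.2.1 i.castSucc)

/-- A source in `𝒫(u,u)` is a `v`-th order conditional Markov source
(the set `𝒫_v(u,u)`) if each policy depends on its arguments only through
`(x_{t-v}^{t-1}, s_{t-v-1}^{t-u-1}, y^{t-u-1})` (windows truncated for
small `t`). -/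
def IsMarkov {N u : ℕ} (v : ℕ) (src : Source X S Y N u) : Prop :=
  ∀ (t : Fin N) (x x' : Fin N → X) (s s' : Fin (N + 1) → S) (y y' : Fin N → Y),
    (∀ j : Fin N, (t : ℕ) ≤ (j : ℕ) + v ∧ (j : ℕ) < (t : ℕ) → x j = x' j) →
    (∀ j : Fin (N + 1), (t : ℕ) ≤ (j : ℕ) + v ∧ (j : ℕ) + u ≤ (t : ℕ) → s j = s' j) →
    (∀ j : Fin N, (j : ℕ) + u + 1 ≤ (t : ℕ) → y j = y' j) →
    src.pol t x s y = src.pol t x' s' y'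

/-- `Σ_{t=1}^N I(X^t, S_0^{t-v-1}; Y_t | Y^{t-1})` under the joint law of
the source (state window omitted/truncated when `t - v - 1 < 0`). -/
def objFull {N u : ℕ} (v : ℕ) (ch : NCFSC X S Y) (src : Source X S Y N u) : ℝ :=
  ∑ t : Fin N,
    condMI (jointP ch src)
      (fun ω : Traj X S Y N =>
        ((fun j : {j : Fin N // (j : ℕ) ≤ (t : ℕ)} => ω.1 j.1),
          fun j : {j : Fin (N + 1) // (j : ℕ) + v ≤ (t : ℕ)} => ω.2.1 j.1))
      (fun ω => ω.2.2 t)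
      (fun ω => fun j : {j : Fin N // (j : ℕ) < (t : ℕ)} => ω.2.2 j.1)

/-- `Σ_{t=1}^N I(X_{t-v}^t, S_{t-v-1}; Y_t | Y^{t-1})` under the joint law
of the source (windows truncated for small `t`; the singleton state window
`S_{t-v-1}` is encoded by the condition `j + v = t - 1` in 0-based time and
is empty for `t ≤ v`). -/
def objWin {N u : ℕ} (v : ℕ) (ch : NCFSC X S Y) (src : Source X S Y N u) : ℝ :=
  ∑ t : Fin N,
    condMI (jointP ch src)
      (fun ω : Traj X S Y N =>
        ((fun j : {j : Fin N // (t : ℕ) ≤ (j : ℕ) + v ∧ (j : ℕ) ≤ (t : ℕ)} => ω.1 j.1),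
          fun j : {j : Fin (N + 1) // (j : ℕ) + v = (t : ℕ)} => ω.2.1 j.1))
      (fun ω => ω.2.2 t)
      (fun ω => fun j : {j : Fin N // (j : ℕ) < (t : ℕ)} => ω.2.2 j.1)

/-- Directed information `I(X^N → Y^N) = Σ_{t=1}^N I(X^t; Y_t | Y^{t-1})`. -/
def directedInfo {N u : ℕ} (ch : NCFSC X S Y) (src : Source X S Y N u) : ℝ :=
  ∑ t : Fin N,
    condMI (jointP ch src)
      (fun ω : Traj X S Y N => fun j : {j : Fin N // (j : ℕ) ≤ (t : ℕ)} => ω.1 j.1)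
      (fun ω => ω.2.2 t)
      (fun ω => fun j : {j : Fin N // (j : ℕ) < (t : ℕ)} => ω.2.2 j.1)

/-- The a posteriori vectors `α_{t-1}(y^{t-u-1})` and `α_{t-1}(ỹ^{t-u-1})`
(at the 1-based time `(t:ℕ)+1`) induced by the two output histories `yh`
and `yh'` coincide: for all window values `(x_{t-v}^{t-1}, s_{t-v-1}^{t-u-1})`
the two a posteriori probabilities agree. -/
def alphaWinEq {N u : ℕ} (v : ℕ) (ch : NCFSC X S Y) (src : Source X S Y N u)
    (t : Fin N) (yh yh' : Fin N → Y) : Prop :=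
  ∀ (xf : Fin N → X) (sf : Fin (N + 1) → S),
    condPr (jointP ch src)
        {ω : Traj X S Y N |
          (∀ j : Fin N, (t : ℕ) ≤ (j : ℕ) + v ∧ (j : ℕ) < (t : ℕ) → ω.1 j = xf j) ∧
            ∀ j : Fin (N + 1), (t : ℕ) ≤ (j : ℕ) + v ∧ (j : ℕ) + u ≤ (t : ℕ) → ω.2.1 j = sf j}
        {ω : Traj X S Y N | ∀ j : Fin N, (j : ℕ) + u + 1 ≤ (t : ℕ) → ω.2.2 j = yh j} =
      condPr (jointP ch src)
        {ω : Traj X S Y N |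
          (∀ j : Fin N, (t : ℕ) ≤ (j : ℕ) + v ∧ (j : ℕ) < (t : ℕ) → ω.1 j = xf j) ∧
            ∀ j : Fin (N + 1), (t : ℕ) ≤ (j : ℕ) + v ∧ (j : ℕ) + u ≤ (t : ℕ) → ω.2.1 j = sf j}
        {ω : Traj X S Y N | ∀ j : Fin N, (j : ℕ) + u + 1 ≤ (t : ℕ) → ω.2.2 j = yh' j}

/-- The set `𝒫'_v(u,u)`: the policy at each time gives the same value on
any two positive-probability output histories inducing the same a
posteriori vector. -/
def AlphaPolicy {N u : ℕ} (v : ℕ) (ch : NCFSC X S Y) (src : Source X S Y N u) : Prop :=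
  ∀ (t : Fin N) (yh yh' : Fin N → Y),
    0 < prE (jointP ch src)
        {ω : Traj X S Y N | ∀ j : Fin N, (j : ℕ) + u + 1 ≤ (t : ℕ) → ω.2.2 j = yh j} →
    0 < prE (jointP ch src)
        {ω : Traj X S Y N | ∀ j : Fin N, (j : ℕ) + u + 1 ≤ (t : ℕ) → ω.2.2 j = yh' j} →
    alphaWinEq v ch src t yh yh' →
    ∀ (xf : Fin N → X) (sf : Fin (N + 1) → S) (a : X),
      src.pol t xf sf yh a = src.pol t xf sf yh' a

/-- The summand of the BCJR forward recursion at (1-based) time `(t:ℕ)+1`: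
`β(x_{t-v}^t, s_{t-v-1}^{t-u}) = α_{t-1}(x_{t-v}^{t-1}, s_{t-v-1}^{t-u-1})
  · π_t(x_t | x_{t-v}^{t-1}, s_{t-v-1}^{t-u-1}, y^{t-u-1})
  · W(y_{t-u}, s_{t-u} | x_{t-u}, s_{t-u-1})`,
where the window values are read off the full functions `xf, sf` and
`α_{t-1}` is the a posteriori probability given `Y^{t-u-1} = y^{t-u-1}`. -/
def bcjrTerm {X S Y : Type} [Fintype X] [Fintype S] [Fintype Y] {N u : ℕ} (v : ℕ)
    (ch : NCFSC X S Y) (src : Source X S Y N u) (t : Fin N) (yh : Fin N → Y)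
    (xf : Fin N → X) (sf : Fin (N + 1) → S) : ℝ :=
  condPr (jointP ch src)
      {ω : Traj X S Y N |
        (∀ j : Fin N, (t : ℕ) ≤ (j : ℕ) + v ∧ (j : ℕ) < (t : ℕ) → ω.1 j = xf j) ∧
          ∀ j : Fin (N + 1), (t : ℕ) ≤ (j : ℕ) + v ∧ (j : ℕ) + u ≤ (t : ℕ) → ω.2.1 j = sf j}
      {ω : Traj X S Y N | ∀ j : Fin N, (j : ℕ) + u + 1 ≤ (t : ℕ) → ω.2.2 j = yh j} *
    src.pol t xf sf yh (xf t) *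
    ch.W (yh ⟨(t : ℕ) - u, by have := t.isLt; omega⟩)
      (sf ⟨(t : ℕ) + 1 - u, by have := t.isLt; omega⟩)
      (xf ⟨(t : ℕ) - u, by have := t.isLt; omega⟩)
      (sf ⟨(t : ℕ) - u, by have := t.isLt; omega⟩)

end FSCPaper

/-!
The joint pmf is `μ(s₀) ∏ π_t W_t`, and each factor is a kernel in coordinates of its own:
`π_t` in `X_t`, `W_t` in `(Y_t, S_t)`. An event that only looks at `X_1^a`, `S_0^b`, `Y_1^b`
with `b ≤ a ≤ b + u + 1` can therefore be evaluated with the source factors after time `a` and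
the channel factors after time `b` deleted, peeling them off from the end: the last remaining
factor reads a coordinate that neither the event nor any other factor reads, so it sums to one.
(Since the sums run over whole trajectories, each freed coordinate also contributes a factor
`1 / |alphabet|`; these factors cancel.)

On the β-window event the last source factor `π_t` and channel factor `W_{t-u}` are constant by
the Markov property, and removing them together with the coordinates `X_t` and
`(Y_{t-u}, S_{t-u})` leaves the α_{t-1}-window event: `Pr(β-window) = Pr(α_{t-1}-window) · π_t · W`.
The numerator and the denominator of `α_t` are sums of β-window probabilities, and the common
factor `Pr(Y^{t-u-1} = y^{t-u-1})` cancels.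
-/

namespace FSCPaper

section General

theorem forall_imp_eq_iff_of_iff_eq_or {ι β : Type} {P P' : ι → Prop} (j₀ : ι)
    (h : ∀ j, P j ↔ j = j₀ ∨ P' j) (f g : ι → β) :
    (∀ j, P j → f j = g j) ↔ f j₀ = g j₀ ∧ ∀ j, P' j → f j = g j := by
  simp only [h, forall_eq_or_imp]

theorem forall_imp_eq_update_iff {ι β : Type} [DecidableEq ι] {P P' : ι → Prop} (k : ι)
    (h : ∀ j, P' j ↔ j = k ∨ P j) (hk : ¬P k) (f g : ι → β) (a : β) :
    (∀ j, P' j → f j = Function.update g k a j) ↔ f k = a ∧ ∀ j, P j → f j = g j := by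
  rw [forall_imp_eq_iff_of_iff_eq_or k h, Function.update_self]
  refine and_congr_right fun _ => forall_congr' fun j => imp_congr_right fun hj => ?_
  rw [Function.update_of_ne (ne_of_apply_ne P fun hjk => hk (hjk ▸ hj))]

theorem prod_filter_lt_succ {M : Type} [CommMonoid M] {N : ℕ} (f : Fin N → M) {a : ℕ}
    (ha : a < N) :
    ∏ i ∈ Finset.univ.filter (fun i : Fin N => (i : ℕ) < a + 1), f i =
      (∏ i ∈ Finset.univ.filter (fun i : Fin N => (i : ℕ) < a), f i) * f ⟨a, ha⟩ := by
  have : Finset.univ.filter (fun i : Fin N => (i : ℕ) < a + 1) =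
      insert ⟨a, ha⟩ (Finset.univ.filter (fun i : Fin N => (i : ℕ) < a)) := by
    ext i
    simp only [Finset.mem_filter_univ, Finset.mem_insert, Fin.ext_iff]
    omega
  rw [this, Finset.prod_insert (by simp), mul_comm]

variable {Ω : Type} [Fintype Ω]

theorem prE_eq_sum_indicator_mul (p : Ω → ℝ) (E : Set Ω) :
    prE p E = ∑ ω, E.indicator 1 ω * p ω := by
  refine Finset.sum_congr rfl fun ω _ => ?_
  by_cases h : ω ∈ E <;> simp [h]

theorem prE_eq_sum_prE_inter_preimage {κ : Type} [Fintype κ] (p : Ω → ℝ) (E : Set Ω)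
    (g : Ω → κ) : prE p E = ∑ k, prE p (E ∩ g ⁻¹' {k}) := by
  classical
  rw [prE, ← Finset.sum_fiberwise Finset.univ g]
  refine Finset.sum_congr rfl fun k _ => ?_
  rw [prE, Finset.sum_filter]
  refine Finset.sum_congr rfl fun ω _ => ?_
  by_cases h : g ω = k <;> simp [h, Set.indicator_apply]

theorem prE_mono {p : Ω → ℝ} (hp : ∀ ω, 0 ≤ p ω) {E F : Set Ω} (h : E ⊆ F) :
    prE p E ≤ prE p F :=
  Finset.sum_le_sum fun ω _ => Set.indicator_le_indicator_of_subset h hp ω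

end General

/-- A coordinate of `Ω` with values in `α`, i.e. a splitting `Ω ≃ Ω' × α`, presented by reading
(`get`) and overwriting (`set`) the coordinate. -/
structure Coord (Ω α : Type) where
  get : Ω → α
  set : Ω → α → Ω
  get_set : ∀ ω a, get (set ω a) = a
  set_set : ∀ ω a b, set (set ω a) b = set ω b
  set_get : ∀ ω, set ω (get ω) = ω

namespace Coord

variable {Ω α : Type} [Fintype α] (c : Coord Ω α)

theorem sum_indicator_get_eq_set (a₀ : α) (ω : Ω) :
    ∑ a, {ω | c.get ω = a₀}.indicator (1 : Ω → ℝ) (c.set ω a) = 1 := by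
  classical
  simp [Set.indicator_apply, c.get_set]

variable [Fintype Ω]

theorem card_mul_sum_sum_set (f : Ω → ℝ) :
    ∑ ω, ∑ a, f (c.set ω a) = Fintype.card α * ∑ ω, f ω := by
  have swap : Function.Involutive fun p : Ω × α => (c.set p.1 p.2, c.get p.1) := by
    rintro ⟨ω, a⟩
    simp only [c.set_set, c.get_set, c.set_get]
  calc ∑ ω, ∑ a, f (c.set ω a) = ∑ p : Ω × α, f (c.set p.1 p.2) :=
        (Fintype.sum_prod_type (fun p : Ω × α => f (c.set p.1 p.2))).symm
    _ = ∑ p : Ω × α, f p.1 := Equiv.sum_comp swap.toPerm (fun p : Ω × α => f p.1)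
    _ = Fintype.card α * ∑ ω, f ω := by
      rw [Fintype.sum_prod_type, Finset.mul_sum]
      simp [mul_comm]

theorem sum_mul_eq_inv_card_mul_sum {F G : Ω → ℝ} (hF : ∀ ω a, F (c.set ω a) = F ω)
    (hG : ∀ ω, ∑ a, G (c.set ω a) = 1) :
    ∑ ω, F ω * G ω = (Fintype.card α : ℝ)⁻¹ * ∑ ω, F ω := by
  rcases isEmpty_or_nonempty α with hα | hα
  · have : IsEmpty Ω := ⟨fun ω => hα.false (c.get ω)⟩
    simp
  have hcard : (Fintype.card α : ℝ) ≠ 0 := Nat.cast_ne_zero.mpr Fintype.card_ne_zero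
  rw [eq_inv_mul_iff_mul_eq₀ hcard, ← c.card_mul_sum_sum_set]
  refine Finset.sum_congr rfl fun ω _ => ?_
  simp only [hF, ← Finset.mul_sum, hG, mul_one]

end Coord

section Trajectories

variable {X S Y : Type} {N : ℕ}

def inputCoord (i : Fin N) : Coord (Traj X S Y N) X where
  get ω := ω.1 i
  set ω a := (Function.update ω.1 i a, ω.2)
  get_set _ _ := Function.update_self ..
  set_set _ _ _ := by simp
  set_get _ := by simp

/-- The output `Y_{k+1}` together with the state `S_{k+1}` emitted with it. -/
def outputCoord (k : Fin N) : Coord (Traj X S Y N) (Y × S) where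
  get ω := (ω.2.2 k, ω.2.1 k.succ)
  set ω p := (ω.1, Function.update ω.2.1 k.succ p.2, Function.update ω.2.2 k p.1)
  get_set _ _ := by simp
  set_set _ _ _ := by simp
  set_get _ := by simp

/-- `F` is a function of the inputs `X_1^a`, the states `S_0^b` and the outputs `Y_1^b`. -/
def DependsOnPrefix {β : Type} (F : Traj X S Y N → β) (a b : ℕ) : Prop :=
  ∀ ω ω' : Traj X S Y N, (∀ i : Fin N, (i : ℕ) < a → ω.1 i = ω'.1 i) →
    (∀ k : Fin (N + 1), (k : ℕ) ≤ b → ω.2.1 k = ω'.2.1 k) →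
    (∀ k : Fin N, (k : ℕ) < b → ω.2.2 k = ω'.2.2 k) → F ω = F ω'

namespace DependsOnPrefix

variable {β γ : Type} {F : Traj X S Y N → β} {a b : ℕ}

theorem mono (hF : DependsOnPrefix F a b) {a' b' : ℕ} (ha : a ≤ a') (hb : b ≤ b') :
    DependsOnPrefix F a' b' := fun ω ω' hx hs hy =>
  hF ω ω' (fun i hi => hx i (by omega)) (fun k hk => hs k (by omega))
    (fun k hk => hy k (by omega))

theorem comp (hF : DependsOnPrefix F a b) (g : β → γ) : DependsOnPrefix (g ∘ F) a b :=
  fun ω ω' hx hs hy => congrArg g (hF ω ω' hx hs hy)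

theorem mul {F G : Traj X S Y N → ℝ} (hF : DependsOnPrefix F a b)
    (hG : DependsOnPrefix G a b) : DependsOnPrefix (F * G) a b :=
  fun ω ω' hx hs hy => congr_arg₂ (· * ·) (hF ω ω' hx hs hy) (hG ω ω' hx hs hy)

theorem finset_prod {ι : Type} (s : Finset ι) {F : ι → Traj X S Y N → ℝ}
    (hF : ∀ i ∈ s, DependsOnPrefix (F i) a b) :
    DependsOnPrefix (fun ω => ∏ i ∈ s, F i ω) a b :=
  fun ω ω' hx hs hy => Finset.prod_congr rfl fun i hi => hF i hi ω ω' hx hs hy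

theorem indicator {E : Set (Traj X S Y N)} (hE : DependsOnPrefix (· ∈ E) a b) :
    DependsOnPrefix (E.indicator (1 : Traj X S Y N → ℝ)) a b := by
  intro ω ω' hx hs hy
  have h : ω ∈ E ↔ ω' ∈ E := Iff.of_eq (hE ω ω' hx hs hy)
  by_cases hω : ω ∈ E
  · rw [Set.indicator_of_mem hω, Set.indicator_of_mem (h.mp hω)]; rfl
  · rw [Set.indicator_of_notMem hω, Set.indicator_of_notMem (h.not.mp hω)]

theorem apply_inputCoord_set (hF : DependsOnPrefix F a b) {i : Fin N} (hi : a ≤ i)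
    (ω : Traj X S Y N) (c : X) : F ((inputCoord i).set ω c) = F ω :=
  hF _ _ (fun j hj => Function.update_of_ne (Fin.ne_of_val_ne (by omega)) _ _)
    (fun _ _ => rfl) (fun _ _ => rfl)

theorem apply_outputCoord_set (hF : DependsOnPrefix F a b) {k : Fin N} (hk : b ≤ k)
    (ω : Traj X S Y N) (p : Y × S) : F ((outputCoord k).set ω p) = F ω :=
  hF _ _ (fun _ _ => rfl)
    (fun j hj => Function.update_of_ne (Fin.ne_of_val_ne (by simp; omega)) _ _)
    (fun j hj => Function.update_of_ne (Fin.ne_of_val_ne (by omega)) _ _)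

end DependsOnPrefix

theorem dependsOnPrefix_inputCoord_get (i : Fin N) :
    DependsOnPrefix (X := X) (S := S) (Y := Y) (inputCoord i).get (i + 1) 0 :=
  fun _ _ hx _ _ => hx i (Nat.lt_succ_self _)

def cylinder (P : Fin N → Prop) (Q : Fin (N + 1) → Prop) (R : Fin N → Prop)
    (xg : Fin N → X) (sg : Fin (N + 1) → S) (yh : Fin N → Y) : Set (Traj X S Y N) :=
  {ω | (∀ j, P j → ω.1 j = xg j) ∧ ∀ j, Q j → ω.2.1 j = sg j} ∩
    {ω | ∀ j, R j → ω.2.2 j = yh j}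

theorem dependsOnPrefix_mem_cylinder {P : Fin N → Prop} {Q : Fin (N + 1) → Prop}
    {R : Fin N → Prop} {a b : ℕ} (hP : ∀ j, P j → (j : ℕ) < a) (hQ : ∀ k, Q k → (k : ℕ) ≤ b)
    (hR : ∀ j, R j → (j : ℕ) < b) (xg : Fin N → X) (sg : Fin (N + 1) → S) (yh : Fin N → Y) :
    DependsOnPrefix (· ∈ cylinder P Q R xg sg yh) a b := by
  intro ω ω' hx hs hy
  simp only [cylinder, Set.mem_inter_iff, Set.mem_ofPred_eq, eq_iff_iff]
  refine and_congr (and_congr ?_ ?_) ?_ <;>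
    refine forall_congr' fun j => forall_congr' fun hj => ?_
  · rw [hx j (hP j hj)]
  · rw [hs j (hQ j hj)]
  · rw [hy j (hR j hj)]

end Trajectories

section Factorization

variable {X S Y : Type} [Fintype S] [Fintype Y] {N : ℕ} (ch : NCFSC X S Y)

theorem NCFSC.sum_W (x : X) (s : S) : ∑ y : Y, ∑ s' : S, ch.W y s' x s = 1 := by
  simp only [NCFSC.W, ← Finset.mul_sum, ch.Q_sum, mul_one, ch.P_sum]

def chanFactor (k : Fin N) (ω : Traj X S Y N) : ℝ :=
  ch.W (ω.2.2 k) (ω.2.1 k.succ) (ω.1 k) (ω.2.1 k.castSucc)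

theorem dependsOnPrefix_chanFactor (k : Fin N) :
    DependsOnPrefix (chanFactor ch k) (k + 1) (k + 1) := fun ω ω' hx hs hy => by
  simp only [chanFactor, hx k (by omega), hy k (by omega), hs k.succ (by simp),
    hs k.castSucc (by simp)]

theorem sum_chanFactor_outputCoord_set (k : Fin N) (ω : Traj X S Y N) :
    ∑ p, chanFactor ch k ((outputCoord k).set ω p) = 1 := by
  rw [Fintype.sum_prod_type, ← ch.sum_W (ω.1 k) (ω.2.1 k.castSucc)]
  simp [chanFactor, outputCoord, Function.update_of_ne (Fin.castSucc_lt_succ (i := k)).ne]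

variable [Fintype X] {u : ℕ} (src : Source X S Y N u)

theorem jointP_nonneg (ω : Traj X S Y N) : 0 ≤ jointP ch src ω :=
  mul_nonneg (ch.init_nonneg _) (Finset.prod_nonneg fun _ _ =>
    mul_nonneg (src.nonneg ..) (mul_nonneg (ch.P_nonneg ..) (ch.Q_nonneg ..)))

def polFactor (i : Fin N) (ω : Traj X S Y N) : ℝ :=
  src.pol i ω.1 ω.2.1 ω.2.2 (ω.1 i)

/-- The joint pmf with the source factors from time `a + 1` on and the channel factors from time
`b + 1` on left out. -/
def prefixWeight (a b : ℕ) (ω : Traj X S Y N) : ℝ :=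
  ch.init (ω.2.1 0) *
    ((∏ i ∈ Finset.univ.filter (fun i : Fin N => (i : ℕ) < a), polFactor src i ω) *
      ∏ k ∈ Finset.univ.filter (fun k : Fin N => (k : ℕ) < b), chanFactor ch k ω)

theorem jointP_eq_prefixWeight : jointP ch src = prefixWeight ch src N N := by
  ext ω
  simp only [jointP, prefixWeight, polFactor, chanFactor, Fin.is_lt, Finset.filter_true,
    Finset.prod_mul_distrib]

theorem prefixWeight_succ_left {a : ℕ} (b : ℕ) (ha : a < N) (ω : Traj X S Y N) :
    prefixWeight ch src (a + 1) b ω = prefixWeight ch src a b ω * polFactor src ⟨a, ha⟩ ω := by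
  rw [prefixWeight, prod_filter_lt_succ _ ha, prefixWeight]
  ring

theorem prefixWeight_succ_right (a : ℕ) {b : ℕ} (hb : b < N) (ω : Traj X S Y N) :
    prefixWeight ch src a (b + 1) ω = prefixWeight ch src a b ω * chanFactor ch ⟨b, hb⟩ ω := by
  rw [prefixWeight, prod_filter_lt_succ _ hb, prefixWeight]
  ring

theorem dependsOnPrefix_polFactor (i : Fin N) :
    DependsOnPrefix (polFactor src i) (i + 1) (i - u) := fun ω ω' hx hs hy => by
  simp only [polFactor, hx i (Nat.lt_succ_self _)]
  exact congrFun (src.causal i _ _ _ _ _ _ (fun j hj => hx j (by omega))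
    (fun k hk => hs k (by omega)) (fun k hk => hy k (by omega))) _

theorem dependsOnPrefix_prefixWeight {a b : ℕ} (hba : b ≤ a) (hab : a ≤ b + u + 1) :
    DependsOnPrefix (prefixWeight ch src a b) a b := by
  have hinit : DependsOnPrefix (fun ω : Traj X S Y N => ch.init (ω.2.1 0)) a b :=
    fun _ _ _ hs _ => congrArg ch.init (hs 0 (Nat.zero_le _))
  refine hinit.mul ((DependsOnPrefix.finset_prod _ fun i hi => ?_).mul
    (DependsOnPrefix.finset_prod _ fun k hk => ?_))
  · rw [Finset.mem_filter_univ] at hi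
    exact (dependsOnPrefix_polFactor src i).mono (by omega) (by omega)
  · rw [Finset.mem_filter_univ] at hk
    exact (dependsOnPrefix_chanFactor ch k).mono (by omega) (by omega)

theorem sum_polFactor_inputCoord_set (i : Fin N) (ω : Traj X S Y N) :
    ∑ c, polFactor src i ((inputCoord i).set ω c) = 1 := by
  have hpast : ∀ c, polFactor src i ((inputCoord i).set ω c) = src.pol i ω.1 ω.2.1 ω.2.2 c :=
    fun c => by
      simp only [polFactor, inputCoord, Function.update_self]
      exact congrFun (src.causal i _ _ _ _ _ _
        (fun j hj => Function.update_of_ne (Fin.ne_of_val_ne (by omega)) _ _)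
        (fun _ _ => rfl) (fun _ _ => rfl)) c
  simp only [hpast, src.sum_one]

end Factorization

section Marginalization

variable {X S Y : Type} [Fintype X] [Fintype S] [Fintype Y] {N u : ℕ}
  (ch : NCFSC X S Y) (src : Source X S Y N u) {F : Traj X S Y N → ℝ}

theorem sum_mul_prefixWeight_succ_left {a b : ℕ} (hF : DependsOnPrefix F a b) (hba : b ≤ a)
    (hab : a ≤ b + u + 1) (ha : a < N) :
    ∑ ω, F ω * prefixWeight ch src (a + 1) b ω =
      (Fintype.card X : ℝ)⁻¹ * ∑ ω, F ω * prefixWeight ch src a b ω := by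
  have hG := hF.mul (dependsOnPrefix_prefixWeight ch src hba hab)
  simp only [prefixWeight_succ_left ch src b ha, ← mul_assoc]
  exact (inputCoord ⟨a, ha⟩).sum_mul_eq_inv_card_mul_sum (hG.apply_inputCoord_set le_rfl)
    (sum_polFactor_inputCoord_set src _)

theorem sum_mul_prefixWeight_succ_right {a b : ℕ} (hF : DependsOnPrefix F a b) (hba : b ≤ a)
    (hab : a ≤ b + u + 1) (hb : b < N) :
    ∑ ω, F ω * prefixWeight ch src a (b + 1) ω =
      (Fintype.card (Y × S) : ℝ)⁻¹ * ∑ ω, F ω * prefixWeight ch src a b ω := by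
  have hG := hF.mul (dependsOnPrefix_prefixWeight ch src hba hab)
  simp only [prefixWeight_succ_right ch src a hb, ← mul_assoc]
  exact (outputCoord ⟨b, hb⟩).sum_mul_eq_inv_card_mul_sum (hG.apply_outputCoord_set le_rfl)
    (sum_chanFactor_outputCoord_set ch _)

theorem sum_mul_jointP_eq_sum_mul_prefixWeight {a b : ℕ} (hF : DependsOnPrefix F a b)
    (hba : b ≤ a) (hab : a ≤ b + u + 1) (ha : a ≤ N) :
    ∑ ω, F ω * jointP ch src ω = (Fintype.card X : ℝ)⁻¹ ^ (N - a) *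
      (Fintype.card (Y × S) : ℝ)⁻¹ ^ (N - b) * ∑ ω, F ω * prefixWeight ch src a b ω := by
  induction hn : (N - a) + (N - b) generalizing a b with
  | zero =>
    obtain ⟨rfl, rfl⟩ : a = N ∧ b = N := by omega
    simp [jointP_eq_prefixWeight]
  | succ n ih =>
    by_cases hleft : a < N ∧ a ≤ b + u
    · rw [ih (hF.mono (Nat.le_succ a) le_rfl) (by omega) (by omega) hleft.1 (by omega),
        sum_mul_prefixWeight_succ_left ch src hF hba hab hleft.1,
        show N - a = N - (a + 1) + 1 by omega]
      ring
    · rw [ih (hF.mono le_rfl (Nat.le_succ b)) (by omega) (by omega) ha (by omega),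
        sum_mul_prefixWeight_succ_right ch src hF hba hab (by omega),
        show N - b = N - (b + 1) + 1 by omega]
      ring

theorem sum_mul_indicator_inputCoord_outputCoord {a b : ℕ} (hF : DependsOnPrefix F a b)
    {i k : Fin N} (hi : a ≤ i) (hk : b ≤ k) (x₀ : X) (p₀ : Y × S) :
    ∑ ω, F ω * {ω | (inputCoord i).get ω = x₀}.indicator 1 ω *
        {ω | (outputCoord k).get ω = p₀}.indicator 1 ω =
      (Fintype.card (Y × S) : ℝ)⁻¹ * ((Fintype.card X : ℝ)⁻¹ * ∑ ω, F ω) := by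
  have hA : DependsOnPrefix ({ω | (inputCoord i).get ω = x₀}.indicator
      (1 : Traj X S Y N → ℝ)) (i + 1) b :=
    (((dependsOnPrefix_inputCoord_get i).comp (· = x₀)).indicator).mono le_rfl (Nat.zero_le b)
  rw [(outputCoord k).sum_mul_eq_inv_card_mul_sum (F := fun ω => F ω * _)
      (((hF.mono (Nat.le_succ_of_le hi) le_rfl).mul hA).apply_outputCoord_set hk)
      ((outputCoord k).sum_indicator_get_eq_set p₀),
    (inputCoord i).sum_mul_eq_inv_card_mul_sum (hF.apply_inputCoord_set hi)
      ((inputCoord i).sum_indicator_get_eq_set x₀)]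

end Marginalization

section Windows

variable {X S Y : Type} {N : ℕ}

/-- In the paper's 1-based time `t + 1`, the event
`{X_{t-v}^t = x, S_{t-v-1}^{t-u} = s, Y^{t-u} = y}` on which `β` lives. -/
def betaEvent (u v : ℕ) (t : Fin N) (xg : Fin N → X) (sg : Fin (N + 1) → S)
    (yh : Fin N → Y) : Set (Traj X S Y N) :=
  cylinder (fun j => (t : ℕ) ≤ j + v ∧ (j : ℕ) ≤ t)
    (fun j => (t : ℕ) ≤ j + v ∧ (j : ℕ) + u ≤ t + 1) (fun j => (j : ℕ) + u ≤ t) xg sg yh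

/-- In the paper's 1-based time `t + 1`, the event
`{X_{t-v}^{t-1} = x, S_{t-v-1}^{t-u-1} = s, Y^{t-u-1} = y}` on which `α_{t-1}` lives. -/
def alphaPrevEvent (u v : ℕ) (t : Fin N) (xg : Fin N → X) (sg : Fin (N + 1) → S)
    (yh : Fin N → Y) : Set (Traj X S Y N) :=
  cylinder (fun j => (t : ℕ) ≤ j + v ∧ (j : ℕ) < t)
    (fun j => (t : ℕ) ≤ j + v ∧ (j : ℕ) + u ≤ t) (fun j => (j : ℕ) + u + 1 ≤ t) xg sg yh

/-- In the paper's 1-based time `t + 1`, the event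
`{X_{t-v+1}^t = x, S_{t-v}^{t-u} = s, Y^{t-u} = y}` on which `α_t` lives. -/
def alphaEvent (u v : ℕ) (t : Fin N) (xg : Fin N → X) (sg : Fin (N + 1) → S)
    (yh : Fin N → Y) : Set (Traj X S Y N) :=
  cylinder (fun j => (t : ℕ) + 1 ≤ j + v ∧ (j : ℕ) ≤ t)
    (fun j => (t : ℕ) + 1 ≤ j + v ∧ (j : ℕ) + u ≤ t + 1) (fun j => (j : ℕ) + u ≤ t) xg sg yh

variable {u v : ℕ} (t : Fin N) (xg : Fin N → X) (sg : Fin (N + 1) → S) (yh : Fin N → Y)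

theorem dependsOnPrefix_mem_betaEvent {b : ℕ} (hb : (t : ℕ) ≤ b + u) :
    DependsOnPrefix (· ∈ betaEvent u v t xg sg yh) (t + 1) (b + 1) :=
  dependsOnPrefix_mem_cylinder (fun _ h => by omega) (fun _ h => by omega) (fun _ h => by omega)
    xg sg yh

theorem dependsOnPrefix_mem_alphaPrevEvent {b : ℕ} (hb : (t : ℕ) ≤ b + u) :
    DependsOnPrefix (· ∈ alphaPrevEvent u v t xg sg yh) t b :=
  dependsOnPrefix_mem_cylinder (fun _ h => by omega) (fun _ h => by omega) (fun _ h => by omega)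
    xg sg yh

theorem betaEvent_eq_inter (huv : u ≤ v) (m : Fin N) (hm : (m : ℕ) + u = t) :
    betaEvent u v t xg sg yh = alphaPrevEvent u v t xg sg yh ∩
      {ω | (inputCoord t).get ω = xg t} ∩ {ω | (outputCoord m).get ω = (yh m, sg m.succ)} := by
  have hx : ∀ j : Fin N, ((t : ℕ) ≤ j + v ∧ (j : ℕ) ≤ t) ↔
      j = t ∨ ((t : ℕ) ≤ j + v ∧ (j : ℕ) < t) := fun j => by rw [Fin.ext_iff]; omega
  have hs : ∀ j : Fin (N + 1), ((t : ℕ) ≤ j + v ∧ (j : ℕ) + u ≤ t + 1) ↔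
      j = m.succ ∨ ((t : ℕ) ≤ j + v ∧ (j : ℕ) + u ≤ t) :=
    fun j => by rw [Fin.ext_iff, Fin.val_succ]; omega
  have hy : ∀ j : Fin N, (j : ℕ) + u ≤ t ↔ j = m ∨ (j : ℕ) + u + 1 ≤ t :=
    fun j => by rw [Fin.ext_iff]; omega
  ext ω
  simp only [betaEvent, alphaPrevEvent, cylinder, inputCoord, outputCoord, Set.mem_inter_iff,
    Set.mem_ofPred_eq, Prod.mk.injEq, forall_imp_eq_iff_of_iff_eq_or t hx,
    forall_imp_eq_iff_of_iff_eq_or m.succ hs, forall_imp_eq_iff_of_iff_eq_or m hy]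
  tauto

theorem alphaEvent_eq_betaEvent (hvt : (t : ℕ) < v) :
    alphaEvent u v t xg sg yh = betaEvent u v t xg sg yh := by
  have hx : (fun j : Fin N => (t : ℕ) + 1 ≤ j + v ∧ (j : ℕ) ≤ t) =
      fun j : Fin N => (t : ℕ) ≤ j + v ∧ (j : ℕ) ≤ t := funext fun j => propext (by omega)
  have hs : (fun j : Fin (N + 1) => (t : ℕ) + 1 ≤ j + v ∧ (j : ℕ) + u ≤ t + 1) =
      fun j : Fin (N + 1) => (t : ℕ) ≤ j + v ∧ (j : ℕ) + u ≤ t + 1 :=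
    funext fun j => propext (by omega)
  rw [alphaEvent, betaEvent, hx, hs]

theorem betaEvent_update_eq_inter (huv : u ≤ v) (hvt : v ≤ (t : ℕ)) (a : X) (b : S) :
    betaEvent u v t (Function.update xg ⟨t - v, by omega⟩ a)
        (Function.update sg ⟨t - v, by omega⟩ b) yh =
      alphaEvent u v t xg sg yh ∩
        (fun ω : Traj X S Y N => (ω.1 ⟨t - v, by omega⟩, ω.2.1 ⟨t - v, by omega⟩)) ⁻¹'
          {(a, b)} := by
  set k : Fin N := ⟨t - v, by omega⟩
  set k' : Fin (N + 1) := ⟨t - v, by omega⟩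
  have hk : (k : ℕ) = t - v := rfl
  have hk' : (k' : ℕ) = t - v := rfl
  have hx : ∀ j : Fin N, ((t : ℕ) ≤ j + v ∧ (j : ℕ) ≤ t) ↔
      j = k ∨ ((t : ℕ) + 1 ≤ j + v ∧ (j : ℕ) ≤ t) := fun j => by rw [Fin.ext_iff, hk]; omega
  have hs : ∀ j : Fin (N + 1), ((t : ℕ) ≤ j + v ∧ (j : ℕ) + u ≤ t + 1) ↔
      j = k' ∨ ((t : ℕ) + 1 ≤ j + v ∧ (j : ℕ) + u ≤ t + 1) :=
    fun j => by rw [Fin.ext_iff, hk']; omega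
  ext ω
  simp only [betaEvent, alphaEvent, cylinder, Set.mem_inter_iff, Set.mem_ofPred_eq,
    Set.mem_preimage, Set.mem_singleton_iff, Prod.mk.injEq,
    forall_imp_eq_update_iff k hx (by rw [hk]; omega),
    forall_imp_eq_update_iff k' hs (by rw [hk']; omega)]
  tauto

end Windows

section Recursion

variable {X S Y : Type} [Fintype S] [Fintype Y] {N u v : ℕ} {t : Fin N} {xg : Fin N → X}
  {sg : Fin (N + 1) → S} {yh : Fin N → Y} {ω : Traj X S Y N}

theorem chanFactor_eq_of_mem_betaEvent (ch : NCFSC X S Y) (huv : u ≤ v) {m : Fin N}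
    (hm : (m : ℕ) + u = t) (hω : ω ∈ betaEvent u v t xg sg yh) :
    chanFactor ch m ω = chanFactor ch m (xg, sg, yh) := by
  obtain ⟨⟨hx, hs⟩, hy⟩ := hω
  simp only [chanFactor, hx m ⟨by omega, by omega⟩, hy m (by omega),
    hs m.succ ⟨by simp; omega, by simp; omega⟩, hs m.castSucc ⟨by simp; omega, by simp; omega⟩]

variable [Fintype X] (ch : NCFSC X S Y) (src : Source X S Y N u)

theorem polFactor_eq_of_mem_betaEvent (hM : IsMarkov v src)
    (hω : ω ∈ betaEvent u v t xg sg yh) : polFactor src t ω = polFactor src t (xg, sg, yh) := by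
  obtain ⟨⟨hx, hs⟩, hy⟩ := hω
  simp only [polFactor, hx t ⟨by omega, le_rfl⟩]
  exact congrFun (hM t _ _ _ _ _ _ (fun j hj => hx j ⟨hj.1, hj.2.le⟩)
    (fun j hj => hs j ⟨hj.1, by omega⟩) (fun j hj => hy j (by omega))) _

theorem indicator_betaEvent_mul_prefixWeight (huv : u ≤ v) (hM : IsMarkov v src) {m : Fin N}
    (hm : (m : ℕ) + u = t) (ω : Traj X S Y N) :
    (betaEvent u v t xg sg yh).indicator 1 ω * prefixWeight ch src (t + 1) (m + 1) ω =
      polFactor src t (xg, sg, yh) * chanFactor ch m (xg, sg, yh) *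
        ((alphaPrevEvent u v t xg sg yh).indicator 1 ω * prefixWeight ch src t m ω *
          {ω | (inputCoord t).get ω = xg t}.indicator 1 ω *
          {ω | (outputCoord m).get ω = (yh m, sg m.succ)}.indicator 1 ω) := by
  have hsplit : (alphaPrevEvent u v t xg sg yh).indicator 1 ω * prefixWeight ch src t m ω *
      {ω | (inputCoord t).get ω = xg t}.indicator 1 ω *
      {ω | (outputCoord m).get ω = (yh m, sg m.succ)}.indicator (1 : Traj X S Y N → ℝ) ω =
        (betaEvent u v t xg sg yh).indicator 1 ω * prefixWeight ch src t m ω := by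
    simp only [betaEvent_eq_inter t xg sg yh huv m hm, Set.inter_indicator_one, Pi.mul_apply]
    ring
  rw [hsplit, prefixWeight_succ_left ch src _ t.isLt, prefixWeight_succ_right ch src _ m.isLt]
  by_cases hω : ω ∈ betaEvent u v t xg sg yh
  · rw [Fin.eta, polFactor_eq_of_mem_betaEvent src hM hω,
      chanFactor_eq_of_mem_betaEvent ch huv hm hω]
    ring
  · simp [Set.indicator_of_notMem hω]

theorem prE_betaEvent_eq_prE_alphaPrevEvent_mul (huv : u ≤ v) (hM : IsMarkov v src)
    {m : Fin N} (hm : (m : ℕ) + u = t) (xg : Fin N → X) (sg : Fin (N + 1) → S)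
    (yh : Fin N → Y) :
    prE (jointP ch src) (betaEvent u v t xg sg yh) =
      prE (jointP ch src) (alphaPrevEvent u v t xg sg yh) *
        (polFactor src t (xg, sg, yh) * chanFactor ch m (xg, sg, yh)) := by
  set G := (alphaPrevEvent u v t xg sg yh).indicator 1 * prefixWeight ch src t m
  have hG : DependsOnPrefix G t m :=
    (dependsOnPrefix_mem_alphaPrevEvent t xg sg yh hm.ge).indicator.mul
      (dependsOnPrefix_prefixWeight ch src (by omega) (by omega))
  calc prE (jointP ch src) (betaEvent u v t xg sg yh)
      = (Fintype.card X : ℝ)⁻¹ ^ (N - (t + 1)) * (Fintype.card (Y × S) : ℝ)⁻¹ ^ (N - (m + 1)) *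
          ∑ ω, (betaEvent u v t xg sg yh).indicator 1 ω *
            prefixWeight ch src (t + 1) (m + 1) ω := by
        rw [prE_eq_sum_indicator_mul, sum_mul_jointP_eq_sum_mul_prefixWeight ch src
          (dependsOnPrefix_mem_betaEvent t xg sg yh hm.ge).indicator (by omega) (by omega)
          t.isLt]
    _ = (Fintype.card X : ℝ)⁻¹ ^ (N - (t + 1)) * (Fintype.card (Y × S) : ℝ)⁻¹ ^ (N - (m + 1)) *
          (polFactor src t (xg, sg, yh) * chanFactor ch m (xg, sg, yh) *
            ((Fintype.card (Y × S) : ℝ)⁻¹ * ((Fintype.card X : ℝ)⁻¹ * ∑ ω, G ω))) := by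
        simp only [indicator_betaEvent_mul_prefixWeight ch src huv hM hm, ← Finset.mul_sum]
        rw [← sum_mul_indicator_inputCoord_outputCoord hG le_rfl le_rfl]
        rfl
    _ = (Fintype.card X : ℝ)⁻¹ ^ (N - t) * (Fintype.card (Y × S) : ℝ)⁻¹ ^ (N - m) *
          (∑ ω, G ω) * (polFactor src t (xg, sg, yh) * chanFactor ch m (xg, sg, yh)) := by
        rw [show N - (t : ℕ) = N - (t + 1) + 1 by omega,
          show N - (m : ℕ) = N - (m + 1) + 1 by omega]
        ring
    _ = _ := by
        rw [prE_eq_sum_indicator_mul, sum_mul_jointP_eq_sum_mul_prefixWeight ch src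
          (dependsOnPrefix_mem_alphaPrevEvent t xg sg yh hm.ge).indicator (by omega) (by omega)
          t.isLt.le]
        rfl

theorem prE_betaEvent_eq_mul_bcjrTerm (huv : u ≤ v) (hM : IsMarkov v src) (htu : u ≤ (t : ℕ))
    (hprev : prE (jointP ch src)
      {ω : Traj X S Y N | ∀ j : Fin N, (j : ℕ) + u + 1 ≤ (t : ℕ) → ω.2.2 j = yh j} ≠ 0)
    (xg : Fin N → X) (sg : Fin (N + 1) → S) :
    prE (jointP ch src) (betaEvent u v t xg sg yh) =
      prE (jointP ch src)
        {ω : Traj X S Y N | ∀ j : Fin N, (j : ℕ) + u + 1 ≤ (t : ℕ) → ω.2.2 j = yh j} *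
      bcjrTerm v ch src t yh xg sg := by
  have hsucc : (⟨t - u, by omega⟩ : Fin N).succ = ⟨t + 1 - u, by omega⟩ :=
    Fin.ext (by simp; omega)
  rw [prE_betaEvent_eq_prE_alphaPrevEvent_mul ch src huv hM (m := ⟨t - u, by omega⟩)
    (Nat.sub_add_cancel htu), bcjrTerm, condPr, chanFactor, hsucc]
  field_simp
  rfl

end Recursion

section Decomposition

variable {X S Y : Type} [Fintype X] [Fintype S] [Fintype Y] {N u v : ℕ} (p : Traj X S Y N → ℝ)
  (t : Fin N) (xf : Fin N → X) (sf : Fin (N + 1) → S) (yh : Fin N → Y)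

theorem prE_alphaEvent_eq_sum_prE_betaEvent_update (huv : u ≤ v) (hvt : v ≤ (t : ℕ)) :
    prE p (alphaEvent u v t xf sf yh) = ∑ a, ∑ b, prE p (betaEvent u v t
      (Function.update xf ⟨t - v, by omega⟩ a) (Function.update sf ⟨t - v, by omega⟩ b) yh) := by
  rw [prE_eq_sum_prE_inter_preimage p _
      fun ω => (ω.1 ⟨t - v, by omega⟩, ω.2.1 ⟨t - v, by omega⟩),
    Fintype.sum_prod_type]
  simp only [betaEvent_update_eq_inter t xf sf yh huv hvt]

open scoped Classical in
theorem prE_outputs_eq_sum_prE_betaEvent :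
    prE p {ω : Traj X S Y N | ∀ j : Fin N, (j : ℕ) + u ≤ (t : ℕ) → ω.2.2 j = yh j} =
      ∑ xg : Fin N → X, ∑ sg : Fin (N + 1) → S,
        if (∀ j : Fin N, ¬((t : ℕ) ≤ (j : ℕ) + v ∧ (j : ℕ) ≤ (t : ℕ)) → xg j = xf j) ∧
            (∀ j : Fin (N + 1),
              ¬((t : ℕ) ≤ (j : ℕ) + v ∧ (j : ℕ) + u ≤ (t : ℕ) + 1) → sg j = sf j) then
          prE p (betaEvent u v t xg sg yh)
        else 0 := by
  set P := fun j : Fin N => (t : ℕ) ≤ (j : ℕ) + v ∧ (j : ℕ) ≤ (t : ℕ)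
  set Q := fun j : Fin (N + 1) => (t : ℕ) ≤ (j : ℕ) + v ∧ (j : ℕ) + u ≤ (t : ℕ) + 1
  -- the fibres of "read the β-window, fill in `xf`, `sf` elsewhere"
  rw [prE_eq_sum_prE_inter_preimage p _ fun ω : Traj X S Y N =>
      ((fun j => if P j then ω.1 j else xf j), fun j => if Q j then ω.2.1 j else sf j),
    Fintype.sum_prod_type]
  refine Finset.sum_congr rfl fun xg _ => Finset.sum_congr rfl fun sg _ => ?_
  have hfib : ∀ ω : Traj X S Y N, (fun j => if P j then ω.1 j else xf j) = xg ∧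
      (fun j => if Q j then ω.2.1 j else sf j) = sg ↔
        ((∀ j, ¬P j → xg j = xf j) ∧ ∀ j, ¬Q j → sg j = sf j) ∧
          (∀ j, P j → ω.1 j = xg j) ∧ ∀ j, Q j → ω.2.1 j = sg j := by
    intro ω
    simp only [funext_iff, ite_eq_iff', forall_and, eq_comm (a := xf _), eq_comm (a := sf _)]
    tauto
  split_ifs with hc
  · congr 1
    ext ω
    simp only [betaEvent, cylinder, Set.mem_inter_iff, Set.mem_preimage, Set.mem_singleton_iff,
      Set.mem_ofPred_eq, Prod.mk.injEq, hfib]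
    tauto
  · convert (show prE p ∅ = 0 by simp [prE])
    ext ω
    simp only [Set.mem_inter_iff, Set.mem_preimage, Set.mem_singleton_iff, Prod.mk.injEq, hfib,
      Set.mem_empty_iff_false, iff_false]
    tauto

end Decomposition

open scoped Classical in
/-- **BCJR forward recursion for the a posteriori vector.**
For a non-controllable FSC with a source in `𝒫_v(u,u)` (`0 ≤ u ≤ v`), a
time `t` with `1 ≤ t - u` (0-based: `u ≤ (t:ℕ)`), and an output history
`y^{t-u}` of positive probability,
`α_t(x_{t-v+1}^t, s_{t-v}^{t-u})
  = ( Σ_{x_{t-v}, s_{t-v-1}} β ) / ( Σ_{x_{t-v}^t, s_{t-v-1}^{t-u}} β )`.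
The numerator sums `β` over `x_{t-v} ∈ 𝒳`, `s_{t-v-1} ∈ 𝒮` (when `t > v`;
for `t ≤ v` these variables are truncated away), and the denominator sums
`β` over all values of the whole windows `x_{t-v}^t` and `s_{t-v-1}^{t-u}`
(realized by summing over full functions constrained to agree with
`(xf, sf)` off these windows). -/
theorem statement8 {X S Y : Type} [Fintype X] [Fintype S] [Fintype Y] {N u : ℕ}
    (ch : NCFSC X S Y) (src : Source X S Y N u) (v : ℕ) (huv : u ≤ v)
    (hM : IsMarkov v src)
    (t : Fin N) (htu : u ≤ (t : ℕ)) (yh : Fin N → Y)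
    (hpos : 0 < prE (jointP ch src)
      {ω : Traj X S Y N | ∀ j : Fin N, (j : ℕ) + u ≤ (t : ℕ) → ω.2.2 j = yh j})
    (xf : Fin N → X) (sf : Fin (N + 1) → S) :
    condPr (jointP ch src)
        {ω : Traj X S Y N |
          (∀ j : Fin N, (t : ℕ) + 1 ≤ (j : ℕ) + v ∧ (j : ℕ) ≤ (t : ℕ) → ω.1 j = xf j) ∧
            ∀ j : Fin (N + 1),
              (t : ℕ) + 1 ≤ (j : ℕ) + v ∧ (j : ℕ) + u ≤ (t : ℕ) + 1 → ω.2.1 j = sf j}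
        {ω : Traj X S Y N | ∀ j : Fin N, (j : ℕ) + u ≤ (t : ℕ) → ω.2.2 j = yh j} =
      (if v ≤ (t : ℕ) then
          ∑ a : X, ∑ b : S,
            bcjrTerm v ch src t yh
              (Function.update xf ⟨(t : ℕ) - v, by have := t.isLt; omega⟩ a)
              (Function.update sf ⟨(t : ℕ) - v, by have := t.isLt; omega⟩ b)
        else bcjrTerm v ch src t yh xf sf) /
        (∑ xg : Fin N → X, ∑ sg : Fin (N + 1) → S,
          if (∀ j : Fin N, ¬((t : ℕ) ≤ (j : ℕ) + v ∧ (j : ℕ) ≤ (t : ℕ)) → xg j = xf j) ∧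
              (∀ j : Fin (N + 1),
                ¬((t : ℕ) ≤ (j : ℕ) + v ∧ (j : ℕ) + u ≤ (t : ℕ) + 1) → sg j = sf j) then
            bcjrTerm v ch src t yh xg sg
          else 0) := by
  set q := prE (jointP ch src)
    {ω : Traj X S Y N | ∀ j : Fin N, (j : ℕ) + u + 1 ≤ (t : ℕ) → ω.2.2 j = yh j}
  have hprev : q ≠ 0 := by
    refine (hpos.trans_le (prE_mono (jointP_nonneg ch src) ?_)).ne'
    exact fun ω hω j hj => hω j (by omega)
  have hβ : ∀ xg sg,
      prE (jointP ch src) (betaEvent u v t xg sg yh) = q * bcjrTerm v ch src t yh xg sg :=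
    prE_betaEvent_eq_mul_bcjrTerm ch src huv hM htu hprev
  have hnum : prE (jointP ch src) (alphaEvent u v t xf sf yh) = q * (if v ≤ (t : ℕ) then
      ∑ a : X, ∑ b : S, bcjrTerm v ch src t yh
        (Function.update xf ⟨(t : ℕ) - v, by omega⟩ a)
        (Function.update sf ⟨(t : ℕ) - v, by omega⟩ b)
      else bcjrTerm v ch src t yh xf sf) := by
    split_ifs with hvt
    · simp only [prE_alphaEvent_eq_sum_prE_betaEvent_update _ t xf sf yh huv hvt, hβ,
        Finset.mul_sum]
    · rw [alphaEvent_eq_betaEvent t xf sf yh (by omega), hβ]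
  have hden := prE_outputs_eq_sum_prE_betaEvent (jointP ch src) (u := u) (v := v) t xf sf yh
  simp only [hβ, ← mul_ite_zero, ← Finset.mul_sum] at hden
  exact (congrArg₂ (· / ·) hnum hden).trans (mul_div_mul_left _ _ hprev)

end FSCPaper

end
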